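/- arXiv:2002.00408 — 7 statements merged into one kernel-verified Lean document; each statement's English description precedes it below -/
import Mathlib

section
/- Let X be a topological space, f ∈ F(X) and α > 0. Then liminf_{β→α} L_β f = closure(ℓ_α f) ⊆ closure(L_α f) ⊆ ⋂_{ε>0} closure(ℓ_{α+ε} f) = limsup_{β→α} L_β f. -/
open Set Topology
open scoped ENNReal Pointwise

noncomputable section

/-- Kuratowski upper limit of a net of sets indexed by a relation `r`. -/
def KLimsup {X Λ : Type*} [TopologicalSpace X] (r : Λ → Λ → Prop) (A : Λ → Set X) : Set X :=
  {x | ∀ U ∈ nhds x, ∀ μ : Λ, ∃ l : Λ, r μ l ∧ (A l ∩ U).Nonempty}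

/-- Kuratowski lower limit of a net of sets indexed by a relation `r`. -/
def KLiminf {X Λ : Type*} [TopologicalSpace X] (r : Λ → Λ → Prop) (A : Λ → Set X) : Set X :=
  {x | ∀ U ∈ nhds x, ∃ μ : Λ, ∀ l : Λ, r μ l → (A l ∩ U).Nonempty}

/-- Strict α-level set. -/
def lset {X : Type*} (f : X → ℝ≥0∞) (α : ℝ) : Set X := {x | f x < ENNReal.ofReal α}

/-- Non-strict α-level set. -/
def Lset {X : Type*} (f : X → ℝ≥0∞) (α : ℝ) : Set X := {x | f x ≤ ENNReal.ofReal α}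

/-- A level function: all strict level sets (for real α > 0) are nonempty. -/
def IsLevelFun {X : Type*} (f : X → ℝ≥0∞) : Prop := ∀ α : ℝ, 0 < α → (lset f α).Nonempty

/-- Epigraph E(f) ⊆ X × ℝ. -/
def Epi {X : Type*} (f : X → ℝ≥0∞) : Set (X × ℝ) :=
  {p | 0 < p.2 ∧ f p.1 ≤ ENNReal.ofReal p.2}

/-- Strict epigraph e(f) ⊆ X × ℝ. -/
def epiStrict {X : Type*} (f : X → ℝ≥0∞) : Set (X × ℝ) :=
  {p | 0 < p.2 ∧ f p.1 < ENNReal.ofReal p.2}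

/-- A set is robust if its closure equals the closure of its interior. -/
def Robust {Y : Type*} [TopologicalSpace Y] (A : Set Y) : Prop :=
  closure A = closure (interior A)

/-- Kuratowski upper limit of β ↦ L_β f as β → α along the punctured filter in (0,∞). -/
def PLimsup {X : Type*} [TopologicalSpace X] (f : X → ℝ≥0∞) (α : ℝ) : Set X :=
  {x | ∀ U ∈ nhds x, ∀ δ : ℝ, 0 < δ →
    ∃ β : ℝ, 0 < β ∧ 0 < |β - α| ∧ |β - α| < δ ∧ (Lset f β ∩ U).Nonempty}

/-- Kuratowski lower limit of β ↦ L_β f as β → α along the punctured filter in (0,∞). -/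
def PLiminf {X : Type*} [TopologicalSpace X] (f : X → ℝ≥0∞) (α : ℝ) : Set X :=
  {x | ∀ U ∈ nhds x, ∃ δ : ℝ, 0 < δ ∧
    ∀ β : ℝ, 0 < β → 0 < |β - α| → |β - α| < δ → (Lset f β ∩ U).Nonempty}

/-! Everything follows from the inclusions `ℓ_α f ⊆ L_α f` and `L_α f ⊆ ℓ_β f` for `α < β`,
together with the fact that a point with `f x < α` lies in `L_β f` for every `β ≥ f x`, hence
for every `β` near `α`. -/

section LevelSets

variable {X : Type*} (f : X → ℝ≥0∞)

theorem lset_subset_Lset (α : ℝ) : lset f α ⊆ Lset f α :=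
  fun _ hx => le_of_lt (show f _ < _ from hx)

theorem Lset_subset_lset_of_lt {α β : ℝ} (hβ : 0 < β) (hαβ : α < β) :
    Lset f α ⊆ lset f β :=
  fun _ hx => lt_of_le_of_lt hx ((ENNReal.ofReal_lt_ofReal_iff hβ).mpr hαβ)

theorem exists_lt_forall_mem_Lset_of_mem_lset {x : X} {α : ℝ} (hx : x ∈ lset f α) :
    ∃ γ < α, ∀ β, γ ≤ β → x ∈ Lset f β := by
  have hfin : f x ≠ ⊤ := ne_top_of_lt hx
  refine ⟨(f x).toReal, (ENNReal.lt_ofReal_iff_toReal_lt hfin).mp hx, fun β hγβ => ?_⟩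
  show f x ≤ ENNReal.ofReal β
  rw [← ENNReal.ofReal_toReal hfin]
  exact ENNReal.ofReal_le_ofReal hγβ

variable [TopologicalSpace X]

theorem PLiminf_subset_closure_lset {α : ℝ} (hα : 0 < α) :
    PLiminf f α ⊆ closure (lset f α) := by
  intro x hx
  rw [mem_closure_iff_nhds]
  intro U hU
  obtain ⟨δ, hδ, hL⟩ := hx U hU
  obtain ⟨η, hη, hηδ, hηα⟩ : ∃ η, 0 < η ∧ η < δ ∧ η < α :=
    ⟨min δ α / 2, by positivity, by linarith [min_le_left δ α, lt_min hδ hα],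
      by linarith [min_le_right δ α, lt_min hδ hα]⟩
  have hdist : |α - η - α| = η := by rw [sub_sub_cancel_left, abs_neg, abs_of_pos hη]
  obtain ⟨y, hyL, hyU⟩ :=
    hL (α - η) (by linarith) (by rwa [hdist]) (by rwa [hdist])
  exact ⟨y, hyU, Lset_subset_lset_of_lt f hα (by linarith) hyL⟩

theorem closure_lset_subset_PLiminf (α : ℝ) : closure (lset f α) ⊆ PLiminf f α := by
  intro x hx U hU
  obtain ⟨y, hyU, hy⟩ := mem_closure_iff_nhds.mp hx U hU
  obtain ⟨γ, hγα, hγ⟩ := exists_lt_forall_mem_Lset_of_mem_lset f hy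
  refine ⟨α - γ, by linarith, fun β _ _ hβα => ⟨y, hγ β ?_, hyU⟩⟩
  linarith [neg_abs_le (β - α)]

theorem PLiminf_eq_closure_lset {α : ℝ} (hα : 0 < α) :
    PLiminf f α = closure (lset f α) :=
  (PLiminf_subset_closure_lset f hα).antisymm (closure_lset_subset_PLiminf f α)

theorem closure_Lset_subset_iInter_closure_lset {α : ℝ} (hα : 0 < α) :
    closure (Lset f α) ⊆ ⋂ ε > (0 : ℝ), closure (lset f (α + ε)) :=
  subset_iInter₂ fun _ hε =>
    closure_mono (Lset_subset_lset_of_lt f (by linarith) (by linarith))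

theorem iInter_closure_lset_subset_PLimsup {α : ℝ} (hα : 0 < α) :
    (⋂ ε > (0 : ℝ), closure (lset f (α + ε))) ⊆ PLimsup f α := by
  intro x hx U hU δ hδ
  have hx' : x ∈ closure (lset f (α + δ / 2)) := mem_iInter₂.mp hx (δ / 2) (by positivity)
  obtain ⟨y, hyU, hy⟩ := mem_closure_iff_nhds.mp hx' U hU
  have hdist : |α + δ / 2 - α| = δ / 2 := by
    rw [add_sub_cancel_left, abs_of_pos (by positivity)]
  exact ⟨α + δ / 2, by positivity, by rw [hdist]; positivity, by rw [hdist]; linarith,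
    y, lset_subset_Lset f _ hy, hyU⟩

theorem PLimsup_subset_iInter_closure_lset (α : ℝ) :
    PLimsup f α ⊆ ⋂ ε > (0 : ℝ), closure (lset f (α + ε)) := by
  refine fun x hx => mem_iInter₂.mpr fun ε hε => mem_closure_iff_nhds.mpr fun U hU => ?_
  obtain ⟨β, hβ, -, hβα, y, hyL, hyU⟩ := hx U hU ε hε
  have hβε : β < α + ε := by linarith [le_abs_self (β - α)]
  exact ⟨y, hyU, Lset_subset_lset_of_lt f (by linarith) hβε hyL⟩

end LevelSets

theorem stmt2_general {X : Type*} [TopologicalSpace X] (f : X → ℝ≥0∞)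
    (α : ℝ) (hα : 0 < α) :
    PLiminf f α = closure (lset f α) ∧
    closure (lset f α) ⊆ closure (Lset f α) ∧
    closure (Lset f α) ⊆ (⋂ ε > (0 : ℝ), closure (lset f (α + ε))) ∧
    (⋂ ε > (0 : ℝ), closure (lset f (α + ε))) = PLimsup f α :=
  ⟨PLiminf_eq_closure_lset f hα,
    closure_mono (lset_subset_Lset f α),
    closure_Lset_subset_iInter_closure_lset f hα,
    (iInter_closure_lset_subset_PLimsup f hα).antisymm (PLimsup_subset_iInter_closure_lset f α)⟩

/-- liminf_{β→α} L_β f = closure(ℓ_α f) ⊆ closure(L_α f)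
    ⊆ ⋂_{ε>0} closure(ℓ_{α+ε} f) = limsup_{β→α} L_β f. -/
theorem stmt2 {X : Type*} [TopologicalSpace X] (f : X → ℝ≥0∞) (hf : IsLevelFun f)
    (α : ℝ) (hα : 0 < α) :
    PLiminf f α = closure (lset f α) ∧
    closure (lset f α) ⊆ closure (Lset f α) ∧
    closure (Lset f α) ⊆ (⋂ ε > (0 : ℝ), closure (lset f (α + ε))) ∧
    (⋂ ε > (0 : ℝ), closure (lset f (α + ε))) = PLimsup f α :=
  stmt2_general f α hα
end
end

section
/- Let X be a topological space and f ∈ F(X). If closure(interior(ℓ_α f)) = closure(ℓ_α f) for every α > 0 (i.e. every strict level set of f is robust), then closure(interior(e(f))) = closure(e(f)) in X × ℝ (i.e. the strict epigraph e(f) is robust). In particular every L-robust level function is E-robust. -/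
/-!
Cutting the strict epigraph at heights gives `e(f) = ⋃_{α > 0} ℓ_α f × (α, ∞)`. A product of
robust sets is robust, since closure and interior both commute with products, and a union of
robust sets is robust, since each piece lies in the closure of its own interior.
-/

open Set Topology
open scoped ENNReal Pointwise

noncomputable section

theorem Robust.iUnion {Y : Type*} {ι : Sort*} [TopologicalSpace Y] {s : ι → Set Y}
    (hs : ∀ i, Robust (s i)) : Robust (⋃ i, s i) := by
  refine le_antisymm ?_ (closure_mono interior_subset)
  refine closure_minimal (iUnion_subset fun i => ?_) isClosed_closure
  calc s i ⊆ closure (s i) := subset_closure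
    _ = closure (interior (s i)) := hs i
    _ ⊆ closure (interior (⋃ i, s i)) := closure_mono (interior_mono (subset_iUnion s i))

theorem Robust.prod {Y Z : Type*} [TopologicalSpace Y] [TopologicalSpace Z] {s : Set Y}
    {t : Set Z} (hs : Robust s) (ht : Robust t) : Robust (s ×ˢ t) := by
  rw [Robust, closure_prod_eq, hs, ht, ← closure_prod_eq, interior_prod_eq]

theorem robust_Ioi (α : ℝ) : Robust (Ioi α) := by
  rw [Robust, interior_Ioi]

theorem epiStrict_eq_iUnion {X : Type*} (f : X → ℝ≥0∞) :
    epiStrict f = ⋃ (α : ℝ) (_ : 0 < α), lset f α ×ˢ Ioi α := by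
  ext ⟨x, t⟩
  simp only [epiStrict, lset, mem_iUnion, mem_prod, mem_Ioi]
  constructor
  · rintro ⟨-, hxt⟩
    obtain ⟨α, hα, hxα, hαt⟩ := ENNReal.lt_iff_exists_real_btwn.mp hxt
    exact ⟨α, ENNReal.ofReal_pos.mp (pos_of_gt hxα), hxα,
      (ENNReal.ofReal_lt_ofReal_iff_of_nonneg hα).mp hαt⟩
  · rintro ⟨α, hα, hxα, hαt⟩
    exact ⟨hα.trans hαt, hxα.trans_le (ENNReal.ofReal_le_ofReal hαt.le)⟩

theorem stmt4_general {X : Type*} [TopologicalSpace X] (f : X → ℝ≥0∞)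
    (h : ∀ α : ℝ, 0 < α → Robust (lset f α)) :
    Robust (epiStrict f) := by
  rw [epiStrict_eq_iUnion]
  exact Robust.iUnion fun α => Robust.iUnion fun hα => (h α hα).prod (robust_Ioi α)

/-- if every strict level set of f is robust, then the strict epigraph
e(f) is robust; i.e. every L-robust level function is E-robust. -/
theorem stmt4 {X : Type*} [TopologicalSpace X] (f : X → ℝ≥0∞) (hf : IsLevelFun f)
    (h : ∀ α : ℝ, 0 < α → Robust (lset f α)) :
    Robust (epiStrict f) :=
  stmt4_general f h
end
end

section
/- Let X be a topological space, (f_λ)_{λ∈Λ} a net in F(X) and α > 0. If (x,α) ∈ limsup_λ E(f_λ) then x ∈ limsup_λ L_{α+ε} f_λ for every ε > 0, and if (x,α) ∈ liminf_λ E(f_λ) then x ∈ liminf_λ L_{α+ε} f_λ for every ε > 0. -/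
open Set Topology
open scoped ENNReal Pointwise

noncomputable section

/-! A point of `E(f)` in `U × (-∞, β]` projects to a point of `L_β f ∩ U`, and for `α < β` the
set `U × (-∞, β]` is a neighbourhood of `(x, α)`; so every witness for the Kuratowski limits of the
epigraphs at `(x, α)` is also one for the level sets at `x`. -/

section KuratowskiLimits

variable {X Y Λ : Type*} [TopologicalSpace X] [TopologicalSpace Y] {r : Λ → Λ → Prop}
  {A : Λ → Set Y} {B : Λ → Set X} {x : X} {y : Y}

theorem mem_KLimsup_of_nhds
    (hAB : ∀ U ∈ 𝓝 x, ∃ V ∈ 𝓝 y, ∀ l, (A l ∩ V).Nonempty → (B l ∩ U).Nonempty)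
    (hy : y ∈ KLimsup r A) : x ∈ KLimsup r B := by
  intro U hU μ
  obtain ⟨V, hV, hVU⟩ := hAB U hU
  obtain ⟨l, hμl, hl⟩ := hy V hV μ
  exact ⟨l, hμl, hVU l hl⟩

theorem mem_KLiminf_of_nhds
    (hAB : ∀ U ∈ 𝓝 x, ∃ V ∈ 𝓝 y, ∀ l, (A l ∩ V).Nonempty → (B l ∩ U).Nonempty)
    (hy : y ∈ KLiminf r A) : x ∈ KLiminf r B := by
  intro U hU
  obtain ⟨V, hV, hVU⟩ := hAB U hU
  obtain ⟨μ, hμ⟩ := hy V hV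
  exact ⟨μ, fun l hμl => hVU l (hμ l hμl)⟩

end KuratowskiLimits

theorem Lset_inter_nonempty_of_Epi_inter_prod_Iic {X : Type*} {f : X → ℝ≥0∞} {U : Set X} {β : ℝ}
    (h : (Epi f ∩ U ×ˢ Iic β).Nonempty) : (Lset f β ∩ U).Nonempty := by
  obtain ⟨⟨y, γ⟩, ⟨-, hfy⟩, hyU, hγβ⟩ := h
  exact ⟨y, hfy.trans (ENNReal.ofReal_le_ofReal hγβ), hyU⟩

theorem exists_nhds_Epi_inter_imp_Lset_inter {X Λ : Type*} [TopologicalSpace X]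
    (F : Λ → X → ℝ≥0∞) {α β : ℝ} (hαβ : α < β) (x : X) :
    ∀ U ∈ 𝓝 x, ∃ V ∈ 𝓝 (x, α),
      ∀ l, (Epi (F l) ∩ V).Nonempty → (Lset (F l) β ∩ U).Nonempty :=
  fun U hU => ⟨U ×ˢ Iic β, prod_mem_nhds hU (Iic_mem_nhds hαβ),
    fun _ => Lset_inter_nonempty_of_Epi_inter_prod_Iic⟩

theorem stmt6_general {X Λ : Type*} [TopologicalSpace X] [Preorder Λ]
    (F : Λ → X → ℝ≥0∞)
    (α : ℝ) (x : X) :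
    ((x, α) ∈ KLimsup (· ≤ · : Λ → Λ → Prop) (fun l => Epi (F l)) →
      ∀ ε : ℝ, 0 < ε →
        x ∈ KLimsup (· ≤ · : Λ → Λ → Prop) (fun l => Lset (F l) (α + ε))) ∧
    ((x, α) ∈ KLiminf (· ≤ · : Λ → Λ → Prop) (fun l => Epi (F l)) →
      ∀ ε : ℝ, 0 < ε →
        x ∈ KLiminf (· ≤ · : Λ → Λ → Prop) (fun l => Lset (F l) (α + ε))) :=
  ⟨fun h _ hε => mem_KLimsup_of_nhds
      (exists_nhds_Epi_inter_imp_Lset_inter F (lt_add_of_pos_right α hε) x) h,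
    fun h _ hε => mem_KLiminf_of_nhds
      (exists_nhds_Epi_inter_imp_Lset_inter F (lt_add_of_pos_right α hε) x) h⟩

/-- membership in Kuratowski limits of epigraphs passes to level sets
at any level α + ε with ε > 0. -/
theorem stmt6 {X Λ : Type*} [TopologicalSpace X] [Preorder Λ] [Nonempty Λ]
    [IsDirected Λ (· ≤ ·)] (F : Λ → X → ℝ≥0∞) (hF : ∀ l, IsLevelFun (F l))
    (α : ℝ) (hα : 0 < α) (x : X) :
    ((x, α) ∈ KLimsup (· ≤ · : Λ → Λ → Prop) (fun l => Epi (F l)) →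
      ∀ ε : ℝ, 0 < ε →
        x ∈ KLimsup (· ≤ · : Λ → Λ → Prop) (fun l => Lset (F l) (α + ε))) ∧
    ((x, α) ∈ KLiminf (· ≤ · : Λ → Λ → Prop) (fun l => Epi (F l)) →
      ∀ ε : ℝ, 0 < ε →
        x ∈ KLiminf (· ≤ · : Λ → Λ → Prop) (fun l => Lset (F l) (α + ε))) :=
  stmt6_general F α x
end
end

section
/- Let X be a topological space, (f_λ)_{λ∈Λ} a net in F(X) and f ∈ F(X). If (f_λ) L-converges to f, then (f_λ) E-converges to f. -/
open Set Topology
open scoped ENNReal Pointwise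

noncomputable section

/-- Weak level convergence of a net of level functions. -/
def LConvergesTo {X Λ : Type*} [TopologicalSpace X] (r : Λ → Λ → Prop)
    (F : Λ → X → ℝ≥0∞) (f : X → ℝ≥0∞) : Prop :=
  ∀ α : ℝ, 0 < α →
    KLimsup r (fun l => Lset (F l) α) ⊆ closure (Lset f α) ∧
    closure (Lset f α) ⊆ KLiminf r (fun l => Lset (F l) α)

/-- Weak epigraph convergence of a net of level functions. -/
def EConvergesTo {X Λ : Type*} [TopologicalSpace X] (r : Λ → Λ → Prop)
    (F : Λ → X → ℝ≥0∞) (f : X → ℝ≥0∞) : Prop :=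
  KLimsup r (fun l => Epi (F l)) ⊆ closure (Epi f) ∧
  closure (Epi f) ⊆ KLiminf r (fun l => Epi (F l))

/-!
A point `(x, α)` of the upper limit of the epigraphs yields, for every `β > α`, the point `x` of
the upper limit of the level sets `L_β f_λ`; so `x ∈ cl (L_β f)`, hence `(x, β) ∈ cl E(f)`, and
`β ↓ α` gives `(x, α) ∈ cl E(f)`. Since lower limits are closed, for the lower inclusion it is
enough to treat `(x, γ) ∈ E(f)`: then `x ∈ liminf L_γ f_λ`, and `L_γ f_λ × {γ} ⊆ E(f_λ)`.
-/

open Filter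

theorem Epi_subset_snd_nonneg {X : Type*} (f : X → ℝ≥0∞) : Epi f ⊆ {p | 0 ≤ p.2} :=
  fun _ hp => hp.1.le

section

variable {X Λ : Type*} [TopologicalSpace X]

theorem isClosed_KLiminf (r : Λ → Λ → Prop) (A : Λ → Set X) : IsClosed (KLiminf r A) := by
  refine isClosed_iff_nhds.2 fun x hx U hU => ?_
  obtain ⟨V, hVU, hVo, hxV⟩ := mem_nhds_iff.1 hU
  obtain ⟨y, hyV, hy⟩ := hx V (hVo.mem_nhds hxV)
  obtain ⟨μ, hμ⟩ := hy V (hVo.mem_nhds hyV)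
  exact ⟨μ, fun l hl => (hμ l hl).mono (inter_subset_inter_right _ hVU)⟩

theorem KLimsup_subset_of_isClosed [Nonempty Λ] {r : Λ → Λ → Prop} {A : Λ → Set X} {C : Set X}
    (hC : IsClosed C) (hAC : ∀ l, A l ⊆ C) : KLimsup r A ⊆ C := by
  intro x hx
  by_contra hxC
  obtain ⟨l, -, y, hyA, hyC⟩ := hx Cᶜ (hC.isOpen_compl.mem_nhds hxC) (Classical.arbitrary Λ)
  exact hyC (hAC l hyA)

theorem mem_KLimsup_Lset_of_mem_KLimsup_Epi {r : Λ → Λ → Prop} {F : Λ → X → ℝ≥0∞} {x : X}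
    {α β : ℝ} (hx : (x, α) ∈ KLimsup r (fun l => Epi (F l))) (hαβ : α < β) :
    x ∈ KLimsup r (fun l => Lset (F l) β) := by
  intro U hU μ
  obtain ⟨l, hl, ⟨y, γ⟩, ⟨-, hyγ⟩, hyU, hγβ⟩ :=
    hx (U ×ˢ Iio β) (prod_mem_nhds hU (Iio_mem_nhds hαβ)) μ
  exact ⟨l, hl, y, hyγ.trans (ENNReal.ofReal_le_ofReal hγβ.le), hyU⟩

theorem mk_mem_closure_Epi {f : X → ℝ≥0∞} {x : X} {β : ℝ} (hx : x ∈ closure (Lset f β))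
    (hβ : 0 < β) : (x, β) ∈ closure (Epi f) := by
  have hsub : Lset f β ×ˢ {β} ⊆ Epi f := by
    rintro ⟨y, _⟩ ⟨hy, rfl⟩
    exact ⟨hβ, hy⟩
  exact closure_mono hsub (by rw [closure_prod_eq, closure_singleton]; exact ⟨hx, rfl⟩)

theorem KLimsup_Epi_subset_closure_Epi [Nonempty Λ] {r : Λ → Λ → Prop} {F : Λ → X → ℝ≥0∞}
    {f : X → ℝ≥0∞}
    (h : ∀ α : ℝ, 0 < α → KLimsup r (fun l => Lset (F l) α) ⊆ closure (Lset f α)) :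
    KLimsup r (fun l => Epi (F l)) ⊆ closure (Epi f) := by
  rintro ⟨x, α⟩ hx
  have hα : 0 ≤ α := KLimsup_subset_of_isClosed (isClosed_le continuous_const continuous_snd)
    (fun l => Epi_subset_snd_nonneg (F l)) hx
  have hnear : ∀ᶠ β in 𝓝[>] α, (x, β) ∈ closure (Epi f) :=
    eventually_nhdsWithin_of_forall fun β (hαβ : α < β) =>
      mk_mem_closure_Epi (h β (by linarith) (mem_KLimsup_Lset_of_mem_KLimsup_Epi hx hαβ))
        (by linarith)
  exact isClosed_closure.mem_of_tendsto
    (((continuous_const.prodMk continuous_id).tendsto α).mono_left nhdsWithin_le_nhds) hnear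

theorem mk_mem_KLiminf_Epi {r : Λ → Λ → Prop} {F : Λ → X → ℝ≥0∞} {x : X} {γ : ℝ}
    (hx : x ∈ KLiminf r (fun l => Lset (F l) γ)) (hγ : 0 < γ) :
    (x, γ) ∈ KLiminf r (fun l => Epi (F l)) := by
  intro V hV
  obtain ⟨U, hU, T, hT, hUT⟩ := mem_nhds_prod_iff.1 hV
  obtain ⟨μ, hμ⟩ := hx U hU
  refine ⟨μ, fun l hl => ?_⟩
  obtain ⟨y, hy, hyU⟩ := hμ l hl
  exact ⟨(y, γ), ⟨hγ, hy⟩, hUT ⟨hyU, mem_of_mem_nhds hT⟩⟩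

theorem closure_Epi_subset_KLiminf {r : Λ → Λ → Prop} {F : Λ → X → ℝ≥0∞} {f : X → ℝ≥0∞}
    (h : ∀ α : ℝ, 0 < α → closure (Lset f α) ⊆ KLiminf r (fun l => Lset (F l) α)) :
    closure (Epi f) ⊆ KLiminf r (fun l => Epi (F l)) :=
  closure_minimal (fun ⟨_, γ⟩ ⟨hγ, hx⟩ => mk_mem_KLiminf_Epi (h γ hγ (subset_closure hx)) hγ)
    (isClosed_KLiminf r _)

end

theorem stmt7_general {X Λ : Type*} [TopologicalSpace X] [Preorder Λ] [Nonempty Λ]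
    (F : Λ → X → ℝ≥0∞)
    (f : X → ℝ≥0∞)
    (h : LConvergesTo (· ≤ · : Λ → Λ → Prop) F f) :
    EConvergesTo (· ≤ · : Λ → Λ → Prop) F f :=
  ⟨KLimsup_Epi_subset_closure_Epi fun α hα => (h α hα).1,
    closure_Epi_subset_KLiminf fun α hα => (h α hα).2⟩

/-- L-convergence implies E-convergence. -/
theorem stmt7 {X Λ : Type*} [TopologicalSpace X] [Preorder Λ] [Nonempty Λ]
    [IsDirected Λ (· ≤ ·)] (F : Λ → X → ℝ≥0∞) (hF : ∀ l, IsLevelFun (F l))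
    (f : X → ℝ≥0∞) (hf : IsLevelFun f)
    (h : LConvergesTo (· ≤ · : Λ → Λ → Prop) F f) :
    EConvergesTo (· ≤ · : Λ → Λ → Prop) F f :=
  stmt7_general F f h
end
end

section
/- Let X be a topological space and (f_λ)_{λ∈Λ} a monotone increasing net in F(X) (λ ≤ μ implies E(f_λ) ⊆ E(f_μ)). Define f : X → [0,∞] by f(x) := inf_{λ∈Λ} f_λ(x). Then f ∈ F(X), closure(E(f)) = closure(⋃_{λ∈Λ} E(f_λ)), and the net (f_λ) E-converges to f. -/
open Set Topology
open scoped ENNReal Pointwise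

noncomputable section

/-!
Since `f = ⨅ λ, f_λ`, every point `(x, α)` of `E(f)` is the limit as `δ → 0⁺` of the points
`(x, α + δ)`, each lying in some `E(f_λ)`. Hence `E(f)` and `⋃ λ, E(f_λ)` have the same closure.
For an increasing net of sets `A_λ`, the Kuratowski lower limit contains `closure (⋃ λ, A_λ)`
and the upper limit is always contained in it, so both limits equal that closure.
-/

theorem IsLevelFun.mono {X : Type*} {f g : X → ℝ≥0∞} (hg : IsLevelFun g) (hfg : f ≤ g) :
    IsLevelFun f := fun α hα =>
  (hg α hα).mono fun _ hx => (hfg _).trans_lt hx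

theorem isLevelFun_iInf {X Λ : Type*} [Nonempty Λ] {F : Λ → X → ℝ≥0∞}
    (hF : ∀ l, IsLevelFun (F l)) : IsLevelFun fun x => ⨅ l, F l x :=
  (hF (Classical.arbitrary Λ)).mono fun _ => iInf_le _ _

theorem epi_anti {X : Type*} {f g : X → ℝ≥0∞} (hfg : f ≤ g) : Epi g ⊆ Epi f :=
  fun _ hp => ⟨hp.1, (hfg _).trans hp.2⟩

theorem exists_mem_epi_of_mem_epi_iInf {X Λ : Type*} {F : Λ → X → ℝ≥0∞} {p : X × ℝ}
    (hp : p ∈ Epi fun x => ⨅ l, F l x) {δ : ℝ} (hδ : 0 < δ) :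
    ∃ l, (p.1, p.2 + δ) ∈ Epi (F l) := by
  have hpos : 0 < p.2 + δ := by linarith [hp.1]
  have hlt : ⨅ l, F l p.1 < ENNReal.ofReal (p.2 + δ) :=
    hp.2.trans_lt ((ENNReal.ofReal_lt_ofReal_iff hpos).2 (by linarith))
  obtain ⟨l, hl⟩ := iInf_lt_iff.1 hlt
  exact ⟨l, hpos, hl.le⟩

theorem closure_epi_iInf {X Λ : Type*} [TopologicalSpace X] (F : Λ → X → ℝ≥0∞) :
    closure (Epi fun x => ⨅ l, F l x) = closure (⋃ l, Epi (F l)) := by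
  refine (closure_mono (iUnion_subset fun l => epi_anti fun x => iInf_le _ l)).antisymm' ?_
  refine closure_minimal (fun p hp => ?_) isClosed_closure
  have hshift : Filter.Tendsto (fun δ : ℝ => (p.1, p.2 + δ)) (𝓝[>] 0) (𝓝 p) :=
    ((continuous_const.prodMk (continuous_const.add continuous_id)).tendsto' 0 p
      (by simp)).mono_left nhdsWithin_le_nhds
  exact mem_closure_of_tendsto hshift <| eventually_nhdsWithin_of_forall fun δ hδ =>
    mem_iUnion.2 (exists_mem_epi_of_mem_epi_iInf hp hδ)

theorem kLimsup_subset_closure_iUnion {Y Λ : Type*} [TopologicalSpace Y] [Nonempty Λ]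
    (r : Λ → Λ → Prop) (A : Λ → Set Y) : KLimsup r A ⊆ closure (⋃ l, A l) := by
  intro y hy
  refine mem_closure_iff_nhds.2 fun U hU => ?_
  obtain ⟨l, -, z, hzA, hzU⟩ := hy U hU (Classical.arbitrary Λ)
  exact ⟨z, hzU, mem_iUnion.2 ⟨l, hzA⟩⟩

theorem Monotone.closure_iUnion_subset_kLiminf {Y Λ : Type*} [TopologicalSpace Y] [Preorder Λ]
    {A : Λ → Set Y} (hA : Monotone A) : closure (⋃ l, A l) ⊆ KLiminf (· ≤ ·) A := by
  intro y hy U hU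
  obtain ⟨z, hzU, hz⟩ := mem_closure_iff_nhds.1 hy U hU
  obtain ⟨l, hzA⟩ := mem_iUnion.1 hz
  exact ⟨l, fun m hlm => ⟨z, hA hlm hzA, hzU⟩⟩

theorem stmt11_general {X Λ : Type*} [TopologicalSpace X] [Preorder Λ] [Nonempty Λ]
    (F : Λ → X → ℝ≥0∞) (hF : ∀ l, IsLevelFun (F l))
    (hmono : ∀ l m : Λ, l ≤ m → Epi (F l) ⊆ Epi (F m)) :
    IsLevelFun (fun x => ⨅ l : Λ, F l x) ∧
    closure (Epi (fun x => ⨅ l : Λ, F l x)) = closure (⋃ l : Λ, Epi (F l)) ∧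
    EConvergesTo (· ≤ · : Λ → Λ → Prop) F (fun x => ⨅ l : Λ, F l x) := by
  have hclosure := closure_epi_iInf F
  refine ⟨isLevelFun_iInf hF, hclosure, ?_, ?_⟩ <;> rw [hclosure]
  · exact kLimsup_subset_closure_iUnion _ _
  · exact Monotone.closure_iUnion_subset_kLiminf fun l m => hmono l m

/-- a monotone increasing net of level functions E-converges to the
pointwise infimum f, which is a level function with
closure(E(f)) = closure(⋃_λ E(f_λ)). -/
theorem stmt11 {X Λ : Type*} [TopologicalSpace X] [Preorder Λ] [Nonempty Λ]
    [IsDirected Λ (· ≤ ·)] (F : Λ → X → ℝ≥0∞) (hF : ∀ l, IsLevelFun (F l))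
    (hmono : ∀ l m : Λ, l ≤ m → Epi (F l) ⊆ Epi (F m)) :
    IsLevelFun (fun x => ⨅ l : Λ, F l x) ∧
    closure (Epi (fun x => ⨅ l : Λ, F l x)) = closure (⋃ l : Λ, Epi (F l)) ∧
    EConvergesTo (· ≤ · : Λ → Λ → Prop) F (fun x => ⨅ l : Λ, F l x) :=
  stmt11_general F hF hmono
end
end

section
/- Let G be a topological group and f, g ∈ F(G). For every α > 0 the strict level set of the L-convolution satisfies ℓ_α(f *_L g) = (ℓ_α f)(ℓ_α g); in particular f *_L g ∈ F(G). -/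
open Set Topology
open scoped ENNReal Pointwise

noncomputable section

/-- The L-convolution of two functions on a group. -/
def LConv {G : Type*} [Group G] (f g : G → ℝ≥0∞) : G → ℝ≥0∞ :=
  fun x => ⨅ y : G, max (f (x * y⁻¹)) (g y)

/-- The E-convolution of two functions on a group. -/
def EConv {G : Type*} [Group G] (f g : G → ℝ≥0∞) : G → ℝ≥0∞ :=
  fun x => ⨅ y : G, f (x * y⁻¹) + g y

/-- Set product in the group G × ℝ with (x₁,α₁)(x₂,α₂) = (x₁x₂, α₁+α₂). -/
def prodMul {G : Type*} [Mul G] (S T : Set (G × ℝ)) : Set (G × ℝ) :=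
  {p | ∃ s ∈ S, ∃ t ∈ T, p = (s.1 * t.1, s.2 + t.2)}

theorem lset_LConv {G : Type*} [Group G] (f g : G → ℝ≥0∞) (α : ℝ) :
    lset (LConv f g) α = lset f α * lset g α := by
  ext x
  simp only [lset, LConv, Set.mem_ofPred_eq, Set.mem_mul, iInf_lt_iff, max_lt_iff]
  constructor
  · rintro ⟨y, hxy, hy⟩
    exact ⟨x * y⁻¹, hxy, y, hy, inv_mul_cancel_right x y⟩
  · rintro ⟨a, ha, b, hb, rfl⟩
    exact ⟨b, by rwa [mul_inv_cancel_right], hb⟩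

theorem IsLevelFun.lConv {G : Type*} [Group G] {f g : G → ℝ≥0∞} (hf : IsLevelFun f)
    (hg : IsLevelFun g) : IsLevelFun (LConv f g) := fun α hα =>
  lset_LConv f g α ▸ (hf α hα).mul (hg α hα)

theorem stmt13_general {G : Type*} [Group G]
    (f g : G → ℝ≥0∞) (hf : IsLevelFun f) (hg : IsLevelFun g) :
    (∀ α : ℝ, 0 < α → lset (LConv f g) α = lset f α * lset g α) ∧
    IsLevelFun (LConv f g) :=
  ⟨fun α _ => lset_LConv f g α, hf.lConv hg⟩

/-- ℓ_α(f *_L g) = (ℓ_α f)(ℓ_α g) for all α > 0; in particular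
f *_L g is a level function. -/
theorem stmt13 {G : Type*} [Group G] [TopologicalSpace G] [IsTopologicalGroup G]
    (f g : G → ℝ≥0∞) (hf : IsLevelFun f) (hg : IsLevelFun g) :
    (∀ α : ℝ, 0 < α → lset (LConv f g) α = lset f α * lset g α) ∧
    IsLevelFun (LConv f g) :=
  stmt13_general f g hf hg
end
end

section
/- Let G be a topological group and f, g ∈ F(G). Then E(f) E(g) ⊆ E(f *_E g) ⊆ closure(E(f) E(g)), where the products are set products in the group G × ℝ with multiplication (x₁,α₁)(x₂,α₂) = (x₁x₂, α₁+α₂) and the closure is taken in G × ℝ. -/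
/-!
For `E(f) E(g) ⊆ E(f *_E g)`, a product `(s₁ t₁, s₂ + t₂)` is bounded by the term `y = t₁` of the
infimum defining `f *_E g`. Conversely, if `(f *_E g)(x) ≤ α < β`, some `y` has
`f (x y⁻¹) + g y < β`; sharing the slack between the two summands writes `(x, β)` as
`(x y⁻¹, s) (y, t)` with both factors in the epigraphs, and `(x, α)` is the limit of these points
as `β ↓ α`.
-/

open Set Topology
open scoped ENNReal Pointwise

noncomputable section

open Filter

lemma ENNReal.exists_pos_add_eq_of_add_lt_ofReal {a b : ℝ≥0∞} {β : ℝ}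
    (h : a + b < ENNReal.ofReal β) :
    ∃ s t : ℝ, 0 < s ∧ 0 < t ∧ a ≤ ENNReal.ofReal s ∧ b ≤ ENNReal.ofReal t ∧ s + t = β := by
  have ha : a ≠ ⊤ := ne_top_of_le_ne_top h.ne_top le_self_add
  have hb : b ≠ ⊤ := ne_top_of_le_ne_top h.ne_top le_add_self
  have hlt : a.toReal + b.toReal < β := by
    rwa [← ENNReal.toReal_add ha hb,
      ← ENNReal.lt_ofReal_iff_toReal_lt (ENNReal.add_ne_top.2 ⟨ha, hb⟩)]
  set δ := (β - a.toReal - b.toReal) / 2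
  have hδ : 0 < δ := by simp only [δ]; linarith
  have hs : 0 < a.toReal + δ := by positivity
  have ht : 0 < b.toReal + δ := by positivity
  refine ⟨_, _, hs, ht, ?_, ?_, by ring⟩
  · exact (ENNReal.le_ofReal_iff_toReal_le ha hs.le).2 (by linarith)
  · exact (ENNReal.le_ofReal_iff_toReal_le hb ht.le).2 (by linarith)

section EConv

variable {G : Type*} [Group G]

lemma prodMul_epi_subset_epi_eConv (f g : G → ℝ≥0∞) :
    prodMul (Epi f) (Epi g) ⊆ Epi (EConv f g) := by
  rintro p ⟨s, ⟨hs, hfs⟩, t, ⟨ht, hgt⟩, rfl⟩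
  refine ⟨add_pos hs ht, ?_⟩
  calc EConv f g (s.1 * t.1) ≤ f (s.1 * t.1 * t.1⁻¹) + g t.1 := iInf_le _ t.1
    _ = f s.1 + g t.1 := by rw [mul_inv_cancel_right]
    _ ≤ ENNReal.ofReal s.2 + ENNReal.ofReal t.2 := add_le_add hfs hgt
    _ = ENNReal.ofReal (s.2 + t.2) := (ENNReal.ofReal_add hs.le ht.le).symm

lemma mk_mem_prodMul_epi_of_eConv_lt {f g : G → ℝ≥0∞} {x : G} {β : ℝ}
    (h : EConv f g x < ENNReal.ofReal β) : (x, β) ∈ prodMul (Epi f) (Epi g) := by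
  obtain ⟨y, hy⟩ := iInf_lt_iff.1 h
  obtain ⟨s, t, hs, ht, hfs, hgt, rfl⟩ := ENNReal.exists_pos_add_eq_of_add_lt_ofReal hy
  exact ⟨(x * y⁻¹, s), ⟨hs, hfs⟩, (y, t), ⟨ht, hgt⟩, by simp⟩

end EConv

lemma Prod.mk_mem_closure_of_forall_lt {X : Type*} [TopologicalSpace X] {S : Set (X × ℝ)}
    {x : X} {α : ℝ} (h : ∀ β, α < β → (x, β) ∈ S) : (x, α) ∈ closure S :=
  mem_closure_of_tendsto (b := 𝓝[>] α)
    (((continuous_const.prodMk continuous_id).tendsto α).mono_left nhdsWithin_le_nhds)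
    (eventually_mem_nhdsWithin.mono h)

theorem stmt18_general {G : Type*} [Group G] [TopologicalSpace G]
    (f g : G → ℝ≥0∞) :
    prodMul (Epi f) (Epi g) ⊆ Epi (EConv f g) ∧
    Epi (EConv f g) ⊆ closure (prodMul (Epi f) (Epi g)) := by
  refine ⟨prodMul_epi_subset_epi_eConv f g, ?_⟩
  rintro ⟨x, α⟩ ⟨hα, hle⟩
  exact Prod.mk_mem_closure_of_forall_lt fun β hβ => mk_mem_prodMul_epi_of_eConv_lt <|
    hle.trans_lt (ENNReal.ofReal_lt_ofReal_iff'.2 ⟨hβ, hα.trans hβ⟩)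

/-- E(f)E(g) ⊆ E(f *_E g) ⊆ closure(E(f)E(g)) in G × ℝ. -/
theorem stmt18 {G : Type*} [Group G] [TopologicalSpace G] [IsTopologicalGroup G]
    (f g : G → ℝ≥0∞) (hf : IsLevelFun f) (hg : IsLevelFun g) :
    prodMul (Epi f) (Epi g) ⊆ Epi (EConv f g) ∧
    Epi (EConv f g) ⊆ closure (prodMul (Epi f) (Epi g)) :=
  stmt18_general f g
end
end
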